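/- arXiv:2402.12265 — 3 statements merged into one kernel-verified Lean document; each statement's English description precedes it below -/
import Mathlib

section
/- For the mean squared error loss, the byzantine prediction maximizing the perturbed-mean loss is the one-hot vector of the least likely honest class: for y ∈ Δ_c and α ∈ (0,1], the function x ↦ ½‖y − ((1−α)y + αx)‖² over x ∈ Δ_c attains its maximum at x = e_i where i ∈ argmin_j y_j (e_i the i-th standard basis vector). -/
open Finset

theorem lma_mse_optimal_one_hot
    (c : ℕ) (hc : 1 ≤ c) (y : EuclideanSpace ℝ (Fin c))
    (hy : (∀ i, 0 ≤ y i) ∧ ∑ i, y i = 1)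
    (α : ℝ) (hα : 0 < α ∧ α ≤ 1)
    (i : Fin c) (hi : ∀ j, y i ≤ y j) :
    ∀ x : EuclideanSpace ℝ (Fin c), (∀ j, 0 ≤ x j) → ∑ j, x j = 1 →
      (1/2 : ℝ) * ‖y - ((1 - α) • y + α • x)‖ ^ 2 ≤
      (1/2 : ℝ) * ‖y - ((1 - α) • y + α • EuclideanSpace.single i (1:ℝ))‖ ^ 2 := by
  intro x hx hxs
  obtain ⟨hy0, hys⟩ := hy
  obtain ⟨hα0, hα1⟩ := hα
  have key : ∀ z : EuclideanSpace ℝ (Fin c),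
      y - ((1 - α) • y + α • z) = α • (y - z) := by
    intro z
    ext j
    simp [EuclideanSpace.single]
    ring
  rw [key x, key (EuclideanSpace.single i (1:ℝ)), norm_smul, norm_smul]
  have hnorm : ‖y - x‖ ≤ ‖y - EuclideanSpace.single i (1:ℝ)‖ := by
    rw [EuclideanSpace.norm_eq, EuclideanSpace.norm_eq]
    apply Real.sqrt_le_sqrt
    have hterm : ∀ j, ‖(y - EuclideanSpace.single i (1:ℝ)) j‖ ^ 2
        = y j ^ 2 - 2 * y j * (if j = i then (1:ℝ) else 0)
          + (if j = i then (1:ℝ) else 0) := by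
      intro j
      simp [EuclideanSpace.single_apply, sq_abs]
      by_cases h : j = i <;> simp [h] <;> ring
    have hterm2 : ∀ j, ‖(y - x) j‖ ^ 2 = y j ^ 2 - 2 * y j * x j + x j ^ 2 := by
      intro j
      simp [sq_abs]
      ring
    simp only [hterm, hterm2, Finset.sum_add_distrib, Finset.sum_sub_distrib]
    have h1 : ∑ j, x j ^ 2 ≤ (1:ℝ) := by
      calc ∑ j, x j ^ 2 ≤ ∑ j, x j := by
            apply Finset.sum_le_sum
            intro j _
            have hle1 : x j ≤ 1 := by
              rw [← hxs]
              exact Finset.single_le_sum (fun k _ => hx k) (Finset.mem_univ j)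
            nlinarith [hx j]
        _ = 1 := hxs
    have h2 : y i ≤ ∑ j, y j * x j := by
      calc y i = ∑ j, y i * x j := by rw [← Finset.mul_sum, hxs, mul_one]
        _ ≤ ∑ j, y j * x j := Finset.sum_le_sum fun j _ => by
            exact mul_le_mul_of_nonneg_right (hi j) (hx j)
    have h3 : (∑ j, 2 * y j * (if j = i then (1:ℝ) else 0)) = 2 * y i := by
      simp [Finset.sum_ite_eq', mul_comm]
    have h4 : (∑ j, (if j = i then (1:ℝ) else 0)) = 1 := by
      simp [Finset.sum_ite_eq']
    rw [h3, h4]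
    have h5 : ∑ j, 2 * y j * x j = 2 * ∑ j, y j * x j := by
      rw [Finset.mul_sum]; congr 1; ext j; ring
    rw [h5]
    linarith
  rw [mul_pow, mul_pow]
  have h6 : ‖y - x‖ ^ 2 ≤ ‖y - EuclideanSpace.single i (1:ℝ)‖ ^ 2 :=
    pow_le_pow_left₀ (norm_nonneg _) hnorm 2
  nlinarith [sq_nonneg ‖α‖]
end

section
/- For the cross-entropy loss: let y ∈ Δ_c with all coordinates strictly positive and α ∈ (0,1). Among one-hot vectors e_j, the function j ↦ CEL(y, (1−α)y + α e_j) = −∑_i y_i log((1−α)y_i + α[i=j]) is maximized at j ∈ argmin_i y_i. -/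
/-!
Replacing `y` by `(1 - α) • y + α • e k` changes only the `k`-th logarithm, so the loss is a
constant minus `g (y k)`, where `g t = t * (log ((1 - α) * t + α) - log ((1 - α) * t))`.
With `x = ((1 - α) * t + α) / ((1 - α) * t)` the derivative of `g` is `log x - (1 - x⁻¹) ≥ 0`,
so `g` is monotone and the loss is largest at the smallest coordinate of `y`.
-/

open Finset Real

theorem sum_mul_log_add_ite {ι : Type*} [Fintype ι] [DecidableEq ι]
    (w v : ι → ℝ) (k : ι) (a : ℝ) :
    ∑ i, w i * log (v i + if i = k then a else 0) =
      ∑ i, w i * log (v i) + w k * (log (v k + a) - log (v k)) := by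
  rw [← add_sum_erase _ _ (mem_univ k), ← add_sum_erase _ _ (mem_univ k), if_pos rfl,
    sum_congr rfl fun i hi => by rw [if_neg (ne_of_mem_erase hi), add_zero]]
  ring

theorem hasDerivAt_mul_log_mul_add_sub_log_mul {a b t : ℝ} (ht : 0 < b * t)
    (hta : 0 < b * t + a) :
    HasDerivAt (fun s => s * (log (b * s + a) - log (b * s)))
      (log (b * t + a) - log (b * t) + t * (b / (b * t + a) - b / (b * t))) t := by
  have hlin : HasDerivAt (fun s => b * s) b t := by
    simpa using (hasDerivAt_id t).const_mul b
  simpa using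
    (hasDerivAt_id' t).fun_mul (((hlin.add_const a).log hta.ne').fun_sub (hlin.log ht.ne'))

theorem monotoneOn_mul_log_mul_add_sub_log_mul {a b : ℝ} (hb : 0 < b) (ha : 0 ≤ a) :
    MonotoneOn (fun t => t * (log (b * t + a) - log (b * t))) (Set.Ioi 0) := by
  have hderiv : ∀ t ∈ Set.Ioi (0 : ℝ), HasDerivAt (fun s => s * (log (b * s + a) - log (b * s)))
      (log (b * t + a) - log (b * t) + t * (b / (b * t + a) - b / (b * t))) t := fun t ht =>
    hasDerivAt_mul_log_mul_add_sub_log_mul (mul_pos hb ht) (by have := mul_pos hb ht; linarith)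
  refine monotoneOn_of_deriv_nonneg (convex_Ioi 0)
    (fun t ht => (hderiv t ht).continuousAt.continuousWithinAt)
    (fun t ht => (hderiv t (interior_subset ht)).differentiableAt.differentiableWithinAt)
    fun t ht => ?_
  rw [interior_Ioi, Set.mem_Ioi] at ht
  have hbt : 0 < b * t := mul_pos hb ht
  have hbta : 0 < b * t + a := by linarith
  rw [(hderiv t ht).deriv]
  have hlog : 1 - ((b * t + a) / (b * t))⁻¹ ≤ log ((b * t + a) / (b * t)) :=
    one_sub_inv_le_log_of_pos (by positivity)
  rw [log_div hbta.ne' hbt.ne'] at hlog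
  have hslope : t * (b / (b * t + a) - b / (b * t)) = -(1 - ((b * t + a) / (b * t))⁻¹) := by
    field_simp [ht.ne', hb.ne']
    ring
  linarith

theorem cel_one_hot_maximized_at_least_likely_class_general
    (c : ℕ) (y : Fin c → ℝ)
    (hy_pos : ∀ i, 0 < y i)
    (α : ℝ) (hα : 0 < α ∧ α < 1)
    (j : Fin c) (hj : ∀ i, y j ≤ y i) :
    ∀ k : Fin c,
      -∑ i, y i * Real.log ((1 - α) * y i + if i = k then α else 0) ≤
      -∑ i, y i * Real.log ((1 - α) * y i + if i = j then α else 0) := by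
  intro k
  rw [neg_le_neg_iff, sum_mul_log_add_ite, sum_mul_log_add_ite, add_le_add_iff_left]
  exact monotoneOn_mul_log_mul_add_sub_log_mul (sub_pos.2 hα.2) hα.1.le
    (hy_pos j) (hy_pos k) (hj k)

theorem cel_one_hot_maximized_at_least_likely_class
    (c : ℕ) (hc : 1 ≤ c) (y : Fin c → ℝ)
    (hy_pos : ∀ i, 0 < y i) (hy_sum : ∑ i, y i = 1)
    (α : ℝ) (hα : 0 < α ∧ α < 1)
    (j : Fin c) (hj : ∀ i, y j ≤ y i) :
    ∀ k : Fin c,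
      -∑ i, y i * Real.log ((1 - α) * y i + if i = k then α else 0) ≤
      -∑ i, y i * Real.log ((1 - α) * y i + if i = j then α else 0) :=
  cel_one_hot_maximized_at_least_likely_class_general c y hy_pos α hα j hj
end

section
/- Convergence of gradient descent on a biased objective: let F : ℝ^d → ℝ be differentiable with L-Lipschitz gradient and bounded below by F(w_T) ≥ 0 along the trajectory; suppose iterates w_{t+1} = w_t − (1/L)(∇F(w_t) + B_t) with ‖B_t‖ ≤ √2 α C for all t. Then after T steps, min_{0≤t<T} ‖∇F(w_t)‖² ≤ (2L F(w_0))/T + 2α²C², provided F(w_T) ≥ 0. -/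
/-!
Since the gradient is `L`-Lipschitz, `F` lies below its quadratic upper model along the step:
`F y ≤ F x + ⟪∇F x, y - x⟫ + L/2 ‖y - x‖²`. For the step `y = x - (∇F x + b) / L` this gives
`‖∇F x‖² ≤ 2L (F x - F y) + ‖b‖²`. Summing over `t < T` telescopes to
`∑ ‖∇F(w_t)‖² ≤ 2L (F w₀ - F w_T) + 2Tα²C² ≤ 2L F w₀ + 2Tα²C²`, and the smallest term is at most
the average.
-/

open Finset

section LipschitzGradient

lemma le_add_deriv_add_of_deriv_le {φ φ' : ℝ → ℝ} {M : ℝ}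
    (hφ : ∀ t ∈ Set.Icc (0 : ℝ) 1, HasDerivAt φ (φ' t) t)
    (hφ' : ∀ t ∈ Set.Icc (0 : ℝ) 1, φ' t ≤ φ' 0 + M * t) :
    φ 1 ≤ φ 0 + φ' 0 + M / 2 := by
  have hquad : ∀ t, HasDerivAt (fun t => φ 0 + φ' 0 * t + M / 2 * t ^ 2) (φ' 0 + M * t) t :=
    fun t => ((((hasDerivAt_id' t).const_mul (φ' 0)).const_add (φ 0)).add
      ((hasDerivAt_pow 2 t).const_mul (M / 2))).congr_deriv (by ring)
  have key := image_le_of_deriv_right_le_deriv_boundary (a := 0) (b := 1)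
    (fun t ht => (hφ t ht).continuousAt.continuousWithinAt)
    (fun t ht => (hφ t (Set.Ico_subset_Icc_self ht)).hasDerivWithinAt)
    (B := fun t => φ 0 + φ' 0 * t + M / 2 * t ^ 2) (by simp)
    (fun t _ => (hquad t).continuousAt.continuousWithinAt)
    (fun t _ => (hquad t).hasDerivWithinAt)
    (fun t ht => hφ' t (Set.Ico_subset_Icc_self ht)) (Set.right_mem_Icc.mpr zero_le_one)
  simpa using key

variable {E : Type*} [NormedAddCommGroup E] [InnerProductSpace ℝ E]

lemma HasGradientAt.hasDerivAt_comp_add_smul [CompleteSpace E] {F : E → ℝ} {g x v : E} {t : ℝ}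
    (hF : HasGradientAt F g (x + t • v)) :
    HasDerivAt (fun s : ℝ => F (x + s • v)) (inner ℝ g v) t := by
  have hline : HasDerivAt (fun s : ℝ => x + s • v) v t := by
    simpa using ((hasDerivAt_id t).smul_const v).const_add x
  simpa [Function.comp_def] using hF.hasFDerivAt.comp_hasDerivAt t hline

lemma LipschitzWith.inner_sub_add_smul_le {g : E → E} {K : NNReal} (hg : LipschitzWith K g)
    (x v : E) {t : ℝ} (ht : 0 ≤ t) :
    inner ℝ (g (x + t • v)) v ≤ inner ℝ (g x) v + K * ‖v‖ ^ 2 * t := by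
  have hdist : ‖g (x + t • v) - g x‖ ≤ K * (t * ‖v‖) := by
    simpa [dist_eq_norm, norm_smul, abs_of_nonneg ht] using hg.dist_le_mul (x + t • v) x
  have := calc
    inner ℝ (g (x + t • v) - g x) v ≤ ‖g (x + t • v) - g x‖ * ‖v‖ := real_inner_le_norm _ _
    _ ≤ K * (t * ‖v‖) * ‖v‖ := by gcongr
  rw [inner_sub_left] at this
  linarith

theorem LipschitzWith.le_add_inner_add_sq_of_hasGradientAt [CompleteSpace E] {F : E → ℝ}
    {g : E → E} {K : NNReal} (hF : ∀ x, HasGradientAt F (g x) x) (hg : LipschitzWith K g)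
    (x y : E) :
    F y ≤ F x + inner ℝ (g x) (y - x) + K / 2 * ‖y - x‖ ^ 2 := by
  have h := le_add_deriv_add_of_deriv_le (φ := fun t => F (x + t • (y - x)))
    (fun t _ => (hF _).hasDerivAt_comp_add_smul)
    (fun t ht => by simpa using hg.inner_sub_add_smul_le x (y - x) ht.1)
  simp only [one_smul, add_sub_cancel, zero_smul, add_zero] at h
  linarith

theorem LipschitzWith.sq_norm_le_of_biased_step [CompleteSpace E] {F : E → ℝ} {g : E → E}
    {L : ℝ} (hL : 0 < L) (hF : ∀ x, HasGradientAt F (g x) x) (hg : LipschitzWith L.toNNReal g)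
    (x b : E) :
    ‖g x‖ ^ 2 ≤ 2 * L * (F x - F (x - (1 / L) • (g x + b))) + ‖b‖ ^ 2 := by
  have h := hg.le_add_inner_add_sq_of_hasGradientAt hF x (x - (1 / L) • (g x + b))
  rw [Real.coe_toNNReal _ hL.le, sub_sub_cancel_left, inner_neg_right, real_inner_smul_right,
    norm_neg, norm_smul, Real.norm_of_nonneg (by positivity)] at h
  have hpol : ‖g x‖ ^ 2 = 2 * inner ℝ (g x) (g x + b) - ‖g x + b‖ ^ 2 + ‖b‖ ^ 2 := by
    rw [norm_add_sq_real, inner_add_right, real_inner_self_eq_norm_sq]; ring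
  calc ‖g x‖ ^ 2
      = 2 * L * (F x - (F x + -(1 / L * inner ℝ (g x) (g x + b))
          + L / 2 * (1 / L * ‖g x + b‖) ^ 2)) + ‖b‖ ^ 2 := by
        rw [hpol]; field_simp; ring
    _ ≤ 2 * L * (F x - F (x - (1 / L) • (g x + b))) + ‖b‖ ^ 2 := by gcongr

end LipschitzGradient

lemma Finset.exists_lt_le_div_of_sum_range_le {a : ℕ → ℝ} {T : ℕ} (hT : T ≠ 0) {S : ℝ}
    (h : ∑ t ∈ range T, a t ≤ S) : ∃ t < T, a t ≤ S / T := by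
  have hsum : ∑ t ∈ range T, a t ≤ ∑ _t ∈ range T, S / T := by
    rw [sum_const, card_range, nsmul_eq_mul, mul_div_cancel₀ _ (Nat.cast_ne_zero.mpr hT)]
    exact h
  obtain ⟨t, ht, hle⟩ := exists_le_of_sum_le (nonempty_range_iff.mpr hT) hsum
  exact ⟨t, mem_range.mp ht, hle⟩

theorem biased_gradient_descent_convergence_general
    (d : ℕ) (F : EuclideanSpace ℝ (Fin d) → ℝ)
    (gF : EuclideanSpace ℝ (Fin d) → EuclideanSpace ℝ (Fin d))
    (hF : ∀ w, HasGradientAt F (gF w) w)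
    (L : ℝ) (hL : 0 < L)
    (hLip : LipschitzWith (Real.toNNReal L) gF)
    (α C : ℝ)
    (w B : ℕ → EuclideanSpace ℝ (Fin d))
    (hupd : ∀ t, w (t + 1) = w t - (1 / L) • (gF (w t) + B t))
    (hB : ∀ t, ‖B t‖ ≤ Real.sqrt 2 * α * C)
    (T : ℕ) (hT : 1 ≤ T) (hpos : 0 ≤ F (w T)) :
    ∃ t < T, ‖gF (w t)‖ ^ 2 ≤ 2 * L * F (w 0) / T + 2 * α ^ 2 * C ^ 2 := by
  have hB2 : ∀ t, ‖B t‖ ^ 2 ≤ 2 * α ^ 2 * C ^ 2 := fun t =>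
    calc ‖B t‖ ^ 2 ≤ (Real.sqrt 2 * α * C) ^ 2 := pow_le_pow_left₀ (norm_nonneg _) (hB t) 2
      _ = 2 * α ^ 2 * C ^ 2 := by rw [mul_pow, mul_pow, Real.sq_sqrt zero_le_two]
  have hstep : ∀ t, ‖gF (w t)‖ ^ 2 ≤ 2 * L * (F (w t) - F (w (t + 1))) + 2 * α ^ 2 * C ^ 2 :=
    fun t => by
      have := hLip.sq_norm_le_of_biased_step hL hF (w t) (B t)
      rw [← hupd] at this
      linarith [hB2 t]
  have hsum : ∑ t ∈ range T, ‖gF (w t)‖ ^ 2 ≤ 2 * L * F (w 0) + T * (2 * α ^ 2 * C ^ 2) :=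
    calc ∑ t ∈ range T, ‖gF (w t)‖ ^ 2
        ≤ ∑ t ∈ range T, (2 * L * (F (w t) - F (w (t + 1))) + 2 * α ^ 2 * C ^ 2) :=
          sum_le_sum fun t _ => hstep t
      _ = 2 * L * (F (w 0) - F (w T)) + T * (2 * α ^ 2 * C ^ 2) := by
          rw [sum_add_distrib, ← mul_sum, sum_range_sub' (fun t => F (w t)), sum_const,
            card_range, nsmul_eq_mul]
      _ ≤ 2 * L * F (w 0) + T * (2 * α ^ 2 * C ^ 2) := by gcongr; linarith
  obtain ⟨t, ht, hle⟩ := exists_lt_le_div_of_sum_range_le (by omega) hsum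
  refine ⟨t, ht, hle.trans_eq ?_⟩
  rw [add_div, mul_div_cancel_left₀ _ (by positivity)]

theorem biased_gradient_descent_convergence
    (d : ℕ) (F : EuclideanSpace ℝ (Fin d) → ℝ)
    (gF : EuclideanSpace ℝ (Fin d) → EuclideanSpace ℝ (Fin d))
    (hF : ∀ w, HasGradientAt F (gF w) w)
    (L : ℝ) (hL : 0 < L)
    (hLip : LipschitzWith (Real.toNNReal L) gF)
    (α C : ℝ) (hα : 0 ≤ α ∧ α ≤ 1) (hC : 0 ≤ C)
    (w B : ℕ → EuclideanSpace ℝ (Fin d))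
    (hupd : ∀ t, w (t + 1) = w t - (1 / L) • (gF (w t) + B t))
    (hB : ∀ t, ‖B t‖ ≤ Real.sqrt 2 * α * C)
    (T : ℕ) (hT : 1 ≤ T) (hpos : 0 ≤ F (w T)) :
    ∃ t < T, ‖gF (w t)‖ ^ 2 ≤ 2 * L * F (w 0) / T + 2 * α ^ 2 * C ^ 2 :=
  biased_gradient_descent_convergence_general d F gF hF L hL hLip α C w B hupd hB T hT hpos
end
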